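/- Let p = 2^m + 1 be prime, let g be a primitive root modulo p, let ε = cos(2π/p) + i·sin(2π/p), and for k ∈ {0,1,…,m} and r ∈ ℤ set T_{k,r} = Σ_{a=0}^{2^{m−k}−1} ε^{g^{2^k·a + r}}. Then for every integer k with 1 ≤ k ≤ m − 1, the set {0, 1, …, p} ∪ {T_{k+1,r} : r ∈ ℤ_{2^{k+1}}} is constructible from the set {0, 1, …, p} ∪ {T_{k,r} : r ∈ ℤ_{2^k}} in at most 11·4^k operations. -/

import Mathlib

/-- One operation: to a set `A ⊆ ℂ` containing `x, y` we may add `x + y`, `x - y`,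
`x * y`, `x / y` (when `y ≠ 0`), or any `z` with `z ^ 2 = x`. -/
def Step (A B : Set ℂ) : Prop :=
  ∃ z : ℂ, B = insert z A ∧
    ((∃ x ∈ A, ∃ y ∈ A, z = x + y ∨ z = x - y ∨ z = x * y ∨ (y ≠ 0 ∧ z = x / y)) ∨
      ∃ x ∈ A, z ^ 2 = x)

def ReachableIn (B C : Set ℂ) (n : ℕ) : Prop :=
  ∃ k ≤ n, ∃ A : ℕ → Set ℂ,
    A 0 = B ∧ (∀ i < k, Step (A i) (A (i + 1))) ∧ A k = C

lemma ReachableIn.refl (B : Set ℂ) : ReachableIn B B 0 :=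
  ⟨0, le_rfl, fun _ => B, rfl, by omega, rfl⟩

lemma ReachableIn.mono {B C : Set ℂ} {n n' : ℕ} (h : ReachableIn B C n) (hn : n ≤ n') :
    ReachableIn B C n' := by
  obtain ⟨k, hk, A, h0, hs, hk2⟩ := h
  exact ⟨k, hk.trans hn, A, h0, hs, hk2⟩

lemma ReachableIn.trans {B C D : Set ℂ} {n₁ n₂ : ℕ} (h₁ : ReachableIn B C n₁)
    (h₂ : ReachableIn C D n₂) : ReachableIn B D (n₁ + n₂) := by
  obtain ⟨k₁, hk₁, A₁, hA₁0, hA₁s, hA₁k⟩ := h₁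
  obtain ⟨k₂, hk₂, A₂, hA₂0, hA₂s, hA₂k⟩ := h₂
  refine ⟨k₁ + k₂, by omega, fun i => if i ≤ k₁ then A₁ i else A₂ (i - k₁), by simp [hA₁0], ?_, ?_⟩
  · intro i hi
    dsimp only
    rcases lt_trichotomy i k₁ with h | h | h
    · simp only [if_pos (by omega : i ≤ k₁), if_pos (by omega : i + 1 ≤ k₁)]
      exact hA₁s i h
    · subst h
      simp only [if_pos le_rfl]
      have h2 : ¬ (i + 1 ≤ i) := by omega
      rw [if_neg h2]
      have : i + 1 - i = 1 := by omega
      rw [this]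
      rw [hA₁k, ← hA₂0]
      exact hA₂s 0 (by omega)
    · rw [if_neg (show ¬ i ≤ k₁ by omega), if_neg (show ¬ i + 1 ≤ k₁ by omega)]
      have : i + 1 - k₁ = (i - k₁) + 1 := by omega
      rw [this]
      exact hA₂s (i - k₁) (by omega)
  · dsimp only
    rcases Nat.eq_zero_or_pos k₂ with h | h
    · subst h
      simp only [Nat.add_zero, if_pos le_rfl, hA₁k, ← hA₂k, hA₂0]
    · rw [if_neg (show ¬ k₁ + k₂ ≤ k₁ by omega)]
      simpa using hA₂k

lemma reach_insert {B : Set ℂ} {z : ℂ}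
    (h : (∃ x ∈ B, ∃ y ∈ B, z = x + y ∨ z = x - y ∨ z = x * y ∨ (y ≠ 0 ∧ z = x / y)) ∨
      ∃ x ∈ B, z ^ 2 = x) : ReachableIn B (insert z B) 1 := by
  refine ⟨1, le_rfl, fun i => if i = 0 then B else insert z B, by simp, ?_, by simp⟩
  intro i hi
  have : i = 0 := by omega
  subst this
  simp only [if_pos rfl, if_neg (by omega : ¬ (0+1 = 0))]
  exact ⟨z, rfl, h⟩

lemma ReachableIn.subset {B C : Set ℂ} {n : ℕ} (h : ReachableIn B C n) : B ⊆ C := by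
  obtain ⟨k, hk, A, h0, hs, hk2⟩ := h
  have key : ∀ i ≤ k, A 0 ⊆ A i := by
    intro i
    induction i with
    | zero => intro _; exact subset_rfl
    | succ i ih =>
      intro hik
      obtain ⟨z, hz, -⟩ := hs i (by omega)
      rw [hz]
      exact (ih (by omega)).trans (Set.subset_insert _ _)
  rw [← h0, ← hk2]
  exact key k le_rfl

/-- do one operation, existential form -/
lemma reach_op {B : Set ℂ} (z : ℂ)
    (h : (∃ x ∈ B, ∃ y ∈ B, z = x + y ∨ z = x - y ∨ z = x * y ∨ (y ≠ 0 ∧ z = x / y)) ∨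
      ∃ x ∈ B, z ^ 2 = x) : ∃ C, ReachableIn B C 1 ∧ B ⊆ C ∧ z ∈ C :=
  ⟨insert z B, reach_insert h, Set.subset_insert _ _, Set.mem_insert _ _⟩

lemma sum_range_two_mul {M : Type*} [AddCommMonoid M] (n : ℕ) (f : ℕ → M) :
    ∑ i ∈ Finset.range (2 * n), f i
      = ∑ i ∈ Finset.range n, f (2 * i) + ∑ i ∈ Finset.range n, f (2 * i + 1) := by
  induction n with
  | zero => simp
  | succ n ih =>
    have : 2 * (n + 1) = (2 * n + 1) + 1 := by omega
    rw [this, Finset.sum_range_succ, Finset.sum_range_succ, Finset.sum_range_succ,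
      Finset.sum_range_succ, ih]
    abel

/-- `S` is constructible from `B` in at most `n` operations: there is a chain
`B = A 0, A 1, …, A k` with `k ≤ n`, each set obtained from the previous one by one
operation, such that `S ⊆ A k`. -/
def ConstructibleIn (B S : Set ℂ) (n : ℕ) : Prop :=
  ∃ k ≤ n, ∃ A : ℕ → Set ℂ,
    A 0 = B ∧ (∀ i < k, Step (A i) (A (i + 1))) ∧ S ⊆ A k

/-- `TT p m g ε k r = Σ_{a = 0}^{2 ^ (m - k) - 1} ε ^ (g ^ (2 ^ k * a + r))`, the Gauss
period: `g` is a unit modulo `p` (so exponents of `g` are integers, taken modulo the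
order of `g`, which is `p - 1` for a primitive root), and `ε` is raised to the power
`g ^ (2 ^ k * a + r) (mod p)`, represented by its value in `{0, …, p - 1}`. -/
noncomputable def TT (p m : ℕ) (g : (ZMod p)ˣ) (ε : ℂ) (k : ℕ) (r : ℤ) : ℂ :=
  ∑ a ∈ Finset.range (2 ^ (m - k)),
    ε ^ ((↑(g ^ ((2 : ℤ) ^ k * (a : ℤ) + r)) : ZMod p).val)

lemma TT_rec (p m : ℕ) (g : (ZMod p)ˣ) (ε : ℂ) (k : ℕ) (hkm : k + 1 ≤ m) (r : ℤ) :
    TT p m g ε k r = TT p m g ε (k + 1) r + TT p m g ε (k + 1) (r + 2 ^ k) := by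
  unfold TT
  have hmk : 2 ^ (m - k) = 2 * 2 ^ (m - (k + 1)) := by
    rw [← pow_succ']
    congr 1
    omega
  rw [hmk, sum_range_two_mul]
  congr 1
  · refine Finset.sum_congr rfl fun b _ => ?_
    have : (2 : ℤ) ^ k * ((2 * b : ℕ) : ℤ) + r = (2 : ℤ) ^ (k + 1) * (b : ℤ) + r := by
      push_cast; ring
    rw [this]
  · refine Finset.sum_congr rfl fun b _ => ?_
    have : (2 : ℤ) ^ k * ((2 * b + 1 : ℕ) : ℤ) + r
        = (2 : ℤ) ^ (k + 1) * (b : ℤ) + (r + 2 ^ k) := by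
      push_cast; ring
    rw [this]

lemma TT_mul (p m : ℕ) (hp : p = 2 ^ m + 1) (hprime : p.Prime) (g : (ZMod p)ˣ)
    (hg : orderOf g = p - 1) (ε : ℂ) (hεp : ε ^ p = 1) (k : ℕ) (hkm : k + 1 ≤ m) (r : ℤ) :
    ∃ c0 : ℕ, ∃ c : ℕ → ℕ, c0 ≤ p ∧ (∀ j, c j ≤ p) ∧
      TT p m g ε (k + 1) r * TT p m g ε (k + 1) (r + 2 ^ k)
        = (c0 : ℂ) + ∑ j ∈ Finset.range (2 ^ k), (c j : ℂ) * TT p m g ε k (j : ℤ) := by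
  haveI : Fact p.Prime := ⟨hprime⟩
  haveI : NeZero p := ⟨hprime.pos.ne'⟩
  have hord : orderOf g = 2 ^ m := by rw [hg, hp, Nat.add_sub_cancel]
  -- basic zpow facts
  have hone : g ^ ((2 : ℤ) ^ m) = 1 := by
    have h2 : ((2 : ℤ) ^ m) = ((2 ^ m : ℕ) : ℤ) := by push_cast; ring
    rw [h2, zpow_natCast, ← hord, pow_orderOf_eq_one]
  have hshift : ∀ e q : ℤ, g ^ (e + (2 : ℤ) ^ m * q) = g ^ e := by
    intro e q
    rw [zpow_add, zpow_mul, hone, one_zpow, mul_one]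
  have hzinj : ∀ e1 e2 : ℕ, e1 < 2 ^ m → e2 < 2 ^ m →
      g ^ ((e1 : ℤ)) = g ^ ((e2 : ℤ)) → e1 = e2 := by
    intro e1 e2 h1 h2 h
    rw [zpow_natCast, zpow_natCast] at h
    exact pow_injOn_Iio_orderOf (by simpa [hord] using h1) (by simpa [hord] using h2) h
  have hmul : ∀ u v : ZMod p, ε ^ ((u + v).val) = ε ^ u.val * ε ^ v.val := by
    intro u v
    rw [ZMod.val_add, ← pow_add]
    conv_rhs => rw [← Nat.div_add_mod (u.val + v.val) p]
    rw [pow_add, pow_mul, hεp, one_pow, one_mul]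
  -- setup
  set n1 : ℕ := 2 ^ (m - (k + 1)) with hn1def
  have hn1pos : 0 < n1 := Nat.pow_pos (by norm_num)
  have hn2 : (2 : ℕ) ^ (k + 1) * n1 = 2 ^ m := by
    rw [hn1def, ← pow_add]; congr 1; omega
  set x : ℕ → ZMod p := fun a => ((g ^ ((2 : ℤ) ^ (k + 1) * (a : ℤ) + r) : (ZMod p)ˣ) : ZMod p)
    with hx
  set y : ℕ → ZMod p :=
    fun b => ((g ^ ((2 : ℤ) ^ (k + 1) * (b : ℤ) + (r + 2 ^ k)) : (ZMod p)ˣ) : ZMod p) with hy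
  set S : Finset (ℕ × ℕ) := Finset.range n1 ×ˢ Finset.range n1 with hS
  set φ : ℕ × ℕ → ZMod p := fun s => x s.1 + y s.2 with hφ
  set N : ZMod p → ℕ := fun t => (S.filter fun s => φ s = t).card with hN
  -- y is injective on range n1
  have hyinj : ∀ b b' : ℕ, b < n1 → b' < n1 → y b = y b' → b = b' := by
    intro b b' hb hb' h
    have h2 : g ^ ((2 : ℤ) ^ (k + 1) * (b : ℤ) + (r + 2 ^ k))
        = g ^ ((2 : ℤ) ^ (k + 1) * (b' : ℤ) + (r + 2 ^ k)) := Units.ext h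
    rw [zpow_add g ((2 : ℤ) ^ (k + 1) * (b : ℤ)) (r + 2 ^ k),
      zpow_add g ((2 : ℤ) ^ (k + 1) * (b' : ℤ)) (r + 2 ^ k)] at h2
    have h3 : g ^ ((2 : ℤ) ^ (k + 1) * (b : ℤ)) = g ^ ((2 : ℤ) ^ (k + 1) * (b' : ℤ)) :=
      mul_right_cancel h2
    have e1 : (2 : ℤ) ^ (k + 1) * (b : ℤ) = ((2 ^ (k + 1) * b : ℕ) : ℤ) := by push_cast; ring
    have e2 : (2 : ℤ) ^ (k + 1) * (b' : ℤ) = ((2 ^ (k + 1) * b' : ℕ) : ℤ) := by push_cast; ring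
    rw [e1, e2] at h3
    have hb1 : 2 ^ (k + 1) * b < 2 ^ m := by
      calc 2 ^ (k + 1) * b < 2 ^ (k + 1) * n1 := mul_lt_mul_of_pos_left hb (by positivity)
        _ = 2 ^ m := hn2
    have hb2 : 2 ^ (k + 1) * b' < 2 ^ m := by
      calc 2 ^ (k + 1) * b' < 2 ^ (k + 1) * n1 := mul_lt_mul_of_pos_left hb' (by positivity)
        _ = 2 ^ m := hn2
    have := hzinj _ _ hb1 hb2 h3
    exact Nat.eq_of_mul_eq_mul_left (by positivity) this
  -- product as sum over S
  have hprod : TT p m g ε (k + 1) r * TT p m g ε (k + 1) (r + 2 ^ k)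
      = ∑ s ∈ S, ε ^ ((φ s).val) := by
    unfold TT
    rw [Finset.sum_mul_sum, hS, Finset.sum_product]
    refine Finset.sum_congr rfl fun a _ => Finset.sum_congr rfl fun b _ => ?_
    rw [hφ]
    dsimp only
    rw [hmul]
  -- group by fiber
  have hgroup : ∑ s ∈ S, ε ^ ((φ s).val) = ∑ t : ZMod p, (N t : ℂ) * ε ^ t.val := by
    rw [← Finset.sum_fiberwise_of_maps_to (g := φ) (fun s _ => Finset.mem_univ (φ s))
      (fun s => ε ^ (φ s).val)]
    refine Finset.sum_congr rfl fun t _ => ?_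
    rw [Finset.sum_congr rfl (fun s hs => by rw [(Finset.mem_filter.mp hs).2]),
      Finset.sum_const, nsmul_eq_mul]
  -- split off zero
  have hsplit : ∑ t : ZMod p, (N t : ℂ) * ε ^ t.val
      = (N 0 : ℂ) + ∑ t ∈ Finset.univ \ {0}, (N t : ℂ) * ε ^ t.val := by
    rw [Finset.sum_eq_add_sum_sdiff_singleton_of_mem (Finset.mem_univ (0 : ZMod p))]
    rw [ZMod.val_zero, pow_zero, mul_one]
  -- the nonzero elements are the image of the exponent map
  set ψ : ℕ × ℕ → ZMod p :=
    fun jc => ((g ^ ((2 : ℤ) ^ k * (jc.2 : ℤ) + (jc.1 : ℤ)) : (ZMod p)ˣ) : ZMod p) with hψ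
  set R : Finset (ℕ × ℕ) := Finset.range (2 ^ k) ×ˢ Finset.range (2 ^ (m - k)) with hR
  have hexpbound : ∀ j c : ℕ, j < 2 ^ k → c < 2 ^ (m - k) → 2 ^ k * c + j < 2 ^ m := by
    intro j c hj hc
    calc 2 ^ k * c + j < 2 ^ k * c + 2 ^ k := by omega
      _ = 2 ^ k * (c + 1) := by ring
      _ ≤ 2 ^ k * 2 ^ (m - k) := Nat.mul_le_mul_left _ (by omega)
      _ = 2 ^ m := by rw [← pow_add]; congr 1; omega
  have hψinj : ∀ jc ∈ R, ∀ jc' ∈ R, ψ jc = ψ jc' → jc = jc' := by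
    intro jc hjc jc' hjc' h
    rw [hR, Finset.mem_product, Finset.mem_range, Finset.mem_range] at hjc hjc'
    have hu : (g ^ ((2 : ℤ) ^ k * (jc.2 : ℤ) + (jc.1 : ℤ)))
        = (g ^ ((2 : ℤ) ^ k * (jc'.2 : ℤ) + (jc'.1 : ℤ))) := Units.ext h
    have e1 : (2 : ℤ) ^ k * (jc.2 : ℤ) + (jc.1 : ℤ)
        = ((2 ^ k * jc.2 + jc.1 : ℕ) : ℤ) := by push_cast; ring
    have e2 : (2 : ℤ) ^ k * (jc'.2 : ℤ) + (jc'.1 : ℤ)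
        = ((2 ^ k * jc'.2 + jc'.1 : ℕ) : ℤ) := by push_cast; ring
    rw [e1, e2] at hu
    have := hzinj _ _ (hexpbound _ _ hjc.1 hjc.2) (hexpbound _ _ hjc'.1 hjc'.2) hu
    have hfst : jc.1 = jc'.1 := by
      have h1 : (2 ^ k * jc.2 + jc.1) % 2 ^ k = (2 ^ k * jc'.2 + jc'.1) % 2 ^ k := by rw [this]
      rwa [Nat.mul_add_mod, Nat.mul_add_mod, Nat.mod_eq_of_lt hjc.1,
        Nat.mod_eq_of_lt hjc'.1] at h1
    have hsnd : jc.2 = jc'.2 := by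
      have h2 : 2 ^ k * jc.2 = 2 ^ k * jc'.2 := by omega
      exact Nat.eq_of_mul_eq_mul_left (by positivity) h2
    exact Prod.ext hfst hsnd
  -- image equals univ \ {0}
  have hEeq : R.image ψ = Finset.univ \ {(0 : ZMod p)} := by
    apply Finset.eq_of_subset_of_card_le
    · intro t ht
      obtain ⟨jc, _, rfl⟩ := Finset.mem_image.mp ht
      rw [Finset.mem_sdiff]
      exact ⟨Finset.mem_univ _, by simpa using Units.ne_zero _⟩
    · have hcardim : (R.image ψ).card = 2 ^ k * 2 ^ (m - k) := by
        rw [Finset.card_image_of_injOn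
          (fun a ha b hb hab => hψinj a (Finset.mem_coe.mp ha) b (Finset.mem_coe.mp hb) hab),
          hR, Finset.card_product, Finset.card_range, Finset.card_range]
      rw [Finset.card_sdiff_of_subset (Finset.singleton_subset_iff.mpr (Finset.mem_univ _)),
        Finset.card_singleton, hcardim]
      have hcu : (Finset.univ : Finset (ZMod p)).card = p := by
        rw [Finset.card_univ, ZMod.card]
      have hpw : 2 ^ k * 2 ^ (m - k) = 2 ^ m := by rw [← pow_add]; congr 1; omega
      rw [hcu, hp, hpw]
      omega
  -- invariance of N under multiplication by g ^ 2^k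
  set gk : ZMod p := ((g ^ ((2 : ℤ) ^ k) : (ZMod p)ˣ) : ZMod p) with hgk
  have hgk0 : gk ≠ 0 := Units.ne_zero _
  have hyx : ∀ a : ℕ, gk * x a = y a := by
    intro a
    rw [hgk, hx, hy]
    dsimp only
    rw [← Units.val_mul, ← zpow_add]
    congr 2
    ring
  have hxy : ∀ b : ℕ, gk * y b = x ((b + 1) % n1) := by
    intro b
    rw [hgk, hx, hy]
    dsimp only
    rw [← Units.val_mul, ← zpow_add]
    congr 1
    have hzdm : (((b + 1) % n1 : ℕ) : ℤ) + (n1 : ℤ) * (((b + 1) / n1 : ℕ) : ℤ)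
        = (b : ℤ) + 1 := by exact_mod_cast Nat.mod_add_div (b + 1) n1
    have hz2 : ((2 : ℤ) ^ (k + 1)) * (n1 : ℤ) = 2 ^ m := by exact_mod_cast hn2
    have hkey : (2 : ℤ) ^ (k + 1) * (((b + 1) % n1 : ℕ) : ℤ) + r
          + (2 : ℤ) ^ m * (((b + 1) / n1 : ℕ) : ℤ)
        = (2 : ℤ) ^ k + ((2 : ℤ) ^ (k + 1) * (b : ℤ) + (r + 2 ^ k)) := by
      linear_combination (2 : ℤ) ^ (k + 1) * hzdm - (((b + 1) / n1 : ℕ) : ℤ) * hz2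
    rw [← hkey, hshift]
  have hφinv : ∀ a b : ℕ, φ ((b + 1) % n1, a) = gk * φ (a, b) := by
    intro a b
    rw [hφ]
    dsimp only
    rw [mul_add, hyx, hxy, add_comm]
  -- mod identities
  have idA : ∀ b : ℕ, b < n1 → ((b + 1) % n1 + (n1 - 1)) % n1 = b := by
    intro b hb
    rcases Nat.lt_or_ge (b + 1) n1 with h | h
    · rw [Nat.mod_eq_of_lt h]
      have h2 : b + 1 + (n1 - 1) = b + n1 := by omega
      rw [h2, Nat.add_mod_right, Nat.mod_eq_of_lt hb]
    · have h2 : b + 1 = n1 := by omega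
      rw [h2, Nat.mod_self, Nat.zero_add, Nat.mod_eq_of_lt (by omega)]
      omega
  have idB : ∀ c : ℕ, c < n1 → ((c + (n1 - 1)) % n1 + 1) % n1 = c := by
    intro c hc
    rcases Nat.eq_zero_or_pos c with h | h
    · subst h
      have h4 : (n1 - 1) % n1 = n1 - 1 := Nat.mod_eq_of_lt (by omega)
      have h2 : n1 - 1 + 1 = n1 := by omega
      rw [Nat.zero_add, h4, h2, Nat.mod_self]
    · have h2 : c + (n1 - 1) = (c - 1) + n1 := by omega
      have h4 : (c - 1) % n1 = c - 1 := Nat.mod_eq_of_lt (by omega)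
      have h3 : c - 1 + 1 = c := by omega
      rw [h2, Nat.add_mod_right, h4, h3, Nat.mod_eq_of_lt hc]
  have hmemS : ∀ s : ℕ × ℕ, s ∈ S ↔ s.1 < n1 ∧ s.2 < n1 := by
    intro s
    rw [hS, Finset.mem_product, Finset.mem_range, Finset.mem_range]
  have hNinv : ∀ t : ZMod p, N (gk * t) = N t := by
    intro t
    apply le_antisymm
    · -- map (c,d) ↦ (d, (c + (n1-1)) % n1)
      apply Finset.card_le_card_of_injOn (fun s => (s.2, (s.1 + (n1 - 1)) % n1))
      · intro s hs
        rw [Finset.mem_coe, Finset.mem_filter] at hs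
        rw [Finset.mem_coe, Finset.mem_filter]
        obtain ⟨hsS, hst⟩ := hs
        rw [hmemS] at hsS
        have hb0 : (s.1 + (n1 - 1)) % n1 < n1 := Nat.mod_lt _ hn1pos
        refine ⟨(hmemS _).mpr ⟨hsS.2, hb0⟩, ?_⟩
        have h1 := hφinv s.2 ((s.1 + (n1 - 1)) % n1)
        rw [idB _ hsS.1] at h1
        have h2 : φ (s.1, s.2) = gk * t := by simpa using hst
        rw [← Prod.mk.eta (p := s), h2] at h1
        exact mul_left_cancel₀ hgk0 h1.symm
      · intro s hs s' hs' h
        rw [Finset.mem_coe, Finset.mem_filter, hmemS] at hs hs'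
        have h1 : s.2 = s'.2 := congrArg Prod.fst h
        have h2 : (s.1 + (n1 - 1)) % n1 = (s'.1 + (n1 - 1)) % n1 := congrArg Prod.snd h
        have h3 : s.1 = s'.1 := by
          have := idB _ hs.1.1
          rw [← this, h2, idB _ hs'.1.1]
        exact Prod.ext h3 h1
    · -- map (a,b) ↦ ((b+1) % n1, a)
      apply Finset.card_le_card_of_injOn (fun s => ((s.2 + 1) % n1, s.1))
      · intro s hs
        rw [Finset.mem_coe, Finset.mem_filter] at hs
        rw [Finset.mem_coe, Finset.mem_filter]
        obtain ⟨hsS, hst⟩ := hs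
        rw [hmemS] at hsS
        refine ⟨(hmemS _).mpr ⟨Nat.mod_lt _ hn1pos, hsS.1⟩, ?_⟩
        have h1 := hφinv s.1 s.2
        rw [← Prod.mk.eta (p := s), hst] at h1
        exact h1
      · intro s hs s' hs' h
        rw [Finset.mem_coe, Finset.mem_filter, hmemS] at hs hs'
        have h1 : s.1 = s'.1 := congrArg Prod.snd h
        have h2 : (s.2 + 1) % n1 = (s'.2 + 1) % n1 := congrArg Prod.fst h
        have h3 : s.2 = s'.2 := by
          have ha := idA _ hs.1.2
          rw [← ha, h2, idA _ hs'.1.2]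
        exact Prod.ext h1 h3
  -- N is constant on the coset
  have hNconst : ∀ j c : ℕ,
      N (((g ^ ((2 : ℤ) ^ k * (c : ℤ) + (j : ℤ)) : (ZMod p)ˣ) : ZMod p))
        = N (((g ^ ((j : ℤ)) : (ZMod p)ˣ) : ZMod p)) := by
    intro j c
    induction c with
    | zero =>
      norm_num
    | succ c ih =>
      have he : (2 : ℤ) ^ k * ((c + 1 : ℕ) : ℤ) + (j : ℤ)
          = (2 : ℤ) ^ k + ((2 : ℤ) ^ k * (c : ℤ) + (j : ℤ)) := by push_cast; ring
      rw [he, zpow_add, Units.val_mul, ← hgk, hNinv, ih]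
  -- bound on N
  have hNle : ∀ t : ZMod p, N t ≤ p := by
    intro t
    have h1 : (S.filter fun s => φ s = t).card ≤ (Finset.range n1).card := by
      apply Finset.card_le_card_of_injOn Prod.fst
      · intro s hs
        rw [Finset.mem_coe, Finset.mem_filter, hmemS] at hs
        exact Finset.mem_range.mpr hs.1.1
      · intro s hs s' hs' h
        rw [Finset.mem_coe, Finset.mem_filter, hmemS] at hs hs'
        have hxx : x s.1 = x s'.1 := by rw [h]
        have hyy : y s.2 = y s'.2 := by
          have h1 : x s.1 + y s.2 = x s'.1 + y s'.2 := by
            rw [show x s.1 + y s.2 = φ s from rfl, show x s'.1 + y s'.2 = φ s' from rfl,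
              hs.2, hs'.2]
          rw [hxx] at h1
          exact add_left_cancel h1
        exact Prod.ext h (hyinj _ _ hs.1.2 hs'.1.2 hyy)
    rw [Finset.card_range] at h1
    have h2 : n1 ≤ 2 ^ m := Nat.pow_le_pow_right (by norm_num) (by omega)
    have h3 : 2 ^ m < p := by rw [hp]; exact Nat.lt_succ_self _
    exact le_trans h1 (by omega)
  -- assemble
  refine ⟨N 0, fun j => N (((g ^ ((j : ℤ)) : (ZMod p)ˣ) : ZMod p)), hNle 0, fun j => hNle _, ?_⟩
  rw [hprod, hgroup, hsplit, ← hEeq, Finset.sum_image hψinj, hR, Finset.sum_product]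
  congr 1
  refine Finset.sum_congr rfl fun j hj => ?_
  simp only [hψ, hNconst, ← Finset.mul_sum]
  rfl
/-- Lemma 2: if `p = 2 ^ m + 1` is prime, `g` is a primitive root modulo `p`,
`ε = cos (2π/p) + i sin (2π/p)` and `1 ≤ k ≤ m - 1`, then the set
`{0, 1, …, p} ∪ {T_{k+1,r} : r ∈ ℤ_{2^(k+1)}}` is constructible from
`{0, 1, …, p} ∪ {T_{k,r} : r ∈ ℤ_{2^k}}` in at most `11 · 4 ^ k` operations. -/
theorem T_succ_constructible (p m : ℕ) (hp : p = 2 ^ m + 1) (hprime : p.Prime)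
    (g : (ZMod p)ˣ) (hg : orderOf g = p - 1) (ε : ℂ)
    (hε : ε = Complex.cos (2 * Real.pi / p) + Complex.I * Complex.sin (2 * Real.pi / p))
    (k : ℕ) (hk1 : 1 ≤ k) (hk2 : k ≤ m - 1) :
    ConstructibleIn
      ({z : ℂ | ∃ j : ℕ, j ≤ p ∧ z = (j : ℂ)} ∪
        {z : ℂ | ∃ r : ℕ, r < 2 ^ k ∧ z = TT p m g ε k (r : ℤ)})
      ({z : ℂ | ∃ j : ℕ, j ≤ p ∧ z = (j : ℂ)} ∪
        {z : ℂ | ∃ r : ℕ, r < 2 ^ (k + 1) ∧ z = TT p m g ε (k + 1) (r : ℤ)})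
      (11 * 4 ^ k) := by
  have hm2 : 2 ≤ m := by omega
  have hkm : k + 1 ≤ m := by omega
  have hp5 : 5 ≤ p := by
    have h4 : (2 : ℕ) ^ 2 ≤ 2 ^ m := Nat.pow_le_pow_right (by norm_num) hm2
    omega
  -- ε ^ p = 1
  have hεp : ε ^ p = 1 := by
    have hp0 : (p : ℂ) ≠ 0 := Nat.cast_ne_zero.mpr (by omega)
    rw [hε]
    have h1 : Complex.cos (2 * Real.pi / p) + Complex.I * Complex.sin (2 * Real.pi / p)
        = Complex.exp ((2 * Real.pi / p) * Complex.I) := by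
      rw [Complex.exp_mul_I]; ring
    rw [h1, ← Complex.exp_nat_mul]
    have h2 : (p : ℂ) * ((2 * Real.pi / p) * Complex.I) = 2 * Real.pi * Complex.I := by
      field_simp
    rw [h2, Complex.exp_two_pi_mul_I]
  set B₀ : Set ℂ := {z : ℂ | ∃ j : ℕ, j ≤ p ∧ z = (j : ℂ)} ∪
      {z : ℂ | ∃ r : ℕ, r < 2 ^ k ∧ z = TT p m g ε k (r : ℤ)} with hB₀
  have hbase1 : ∀ j : ℕ, j ≤ p → ((j : ℕ) : ℂ) ∈ B₀ := fun j hj => Or.inl ⟨j, hj, rfl⟩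
  have hbase2 : ∀ r : ℕ, r < 2 ^ k → TT p m g ε k (r : ℤ) ∈ B₀ :=
    fun r hr => Or.inr ⟨r, hr, rfl⟩
  -- building linear combinations
  have build : ∀ i : ℕ, i ≤ 2 ^ k → ∀ c : ℕ → ℕ, (∀ j, c j ≤ p) → ∀ A : Set ℂ, B₀ ⊆ A →
      ∃ C, ReachableIn A C (2 * i) ∧ A ⊆ C ∧
        (∑ j ∈ Finset.range i, ((c j : ℕ) : ℂ) * TT p m g ε k (j : ℤ)) ∈ C := by
    intro i
    induction i with
    | zero =>
      intro _ c hc A hA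
      refine ⟨A, ReachableIn.refl A, subset_rfl, ?_⟩
      rw [Finset.sum_range_zero]
      have := hA (hbase1 0 (by omega))
      simpa using this
    | succ i ih =>
      intro hi c hc A hA
      obtain ⟨C, hreach, hsub, hsum⟩ := ih (by omega) c hc A hA
      have hTmem : TT p m g ε k (i : ℤ) ∈ C := hsub (hA (hbase2 i (by omega)))
      have hcmem : ((c i : ℕ) : ℂ) ∈ C := hsub (hA (hbase1 (c i) (hc i)))
      obtain ⟨C1, h1, hs1, hm1⟩ := reach_op (B := C) (((c i : ℕ) : ℂ) * TT p m g ε k (i : ℤ))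
        (Or.inl ⟨_, hcmem, _, hTmem, Or.inr (Or.inr (Or.inl rfl))⟩)
      obtain ⟨C2, h2, hs2, hm2⟩ := reach_op (B := C1)
        ((∑ j ∈ Finset.range i, ((c j : ℕ) : ℂ) * TT p m g ε k (j : ℤ))
          + ((c i : ℕ) : ℂ) * TT p m g ε k (i : ℤ))
        (Or.inl ⟨_, hs1 hsum, _, hm1, Or.inl rfl⟩)
      refine ⟨C2, ?_, (hsub.trans hs1).trans hs2, ?_⟩
      · have := (hreach.trans h1).trans h2
        have he : 2 * i + 1 + 1 = 2 * (i + 1) := by omega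
        rwa [he] at this
      · rw [Finset.sum_range_succ]
        exact hm2
  -- one stage: construct T_{k+1,r} and T_{k+1,r+2^k}
  have stage : ∀ A : Set ℂ, B₀ ⊆ A → ∀ r : ℕ, r < 2 ^ k →
      ∃ C, ReachableIn A C (2 * 2 ^ k + 8) ∧ A ⊆ C ∧
        TT p m g ε (k + 1) (r : ℤ) ∈ C ∧ TT p m g ε (k + 1) ((r : ℤ) + 2 ^ k) ∈ C := by
    intro A hA r hr
    obtain ⟨c0, c, hc0, hc, hPid⟩ := TT_mul p m hp hprime g hg ε hεp k hkm (r : ℤ)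
    have hrec := TT_rec p m g ε k hkm (r : ℤ)
    set u := TT p m g ε (k + 1) (r : ℤ) with hu
    set v := TT p m g ε (k + 1) ((r : ℤ) + 2 ^ k) with hv
    set t := TT p m g ε k (r : ℤ) with ht
    obtain ⟨C0, hr0, hs0, hsum⟩ := build (2 ^ k) le_rfl c hc A hA
    have hsubB : B₀ ⊆ C0 := hA.trans hs0
    -- P = c0 + sum
    obtain ⟨C1, hr1, hs1, hm1⟩ := reach_op (B := C0)
      (((c0 : ℕ) : ℂ) + ∑ j ∈ Finset.range (2 ^ k), ((c j : ℕ) : ℂ) * TT p m g ε k (j : ℤ))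
      (Or.inl ⟨_, hsubB (hbase1 c0 hc0), _, hsum, Or.inl rfl⟩)
    have htm : t ∈ C1 := hs1 (hsubB (hbase2 r hr))
    -- t * t
    obtain ⟨C2, hr2, hs2, hm2⟩ := reach_op (B := C1) (t * t)
      (Or.inl ⟨_, htm, _, htm, Or.inr (Or.inr (Or.inl rfl))⟩)
    -- 4 * P
    have h4m : ((4 : ℕ) : ℂ) ∈ C2 := hs2 (hs1 (hsubB (hbase1 4 (by omega))))
    obtain ⟨C3, hr3, hs3, hm3⟩ := reach_op (B := C2)
      (((4 : ℕ) : ℂ) * (((c0 : ℕ) : ℂ)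
        + ∑ j ∈ Finset.range (2 ^ k), ((c j : ℕ) : ℂ) * TT p m g ε k (j : ℤ)))
      (Or.inl ⟨_, h4m, _, hs2 hm1, Or.inr (Or.inr (Or.inl rfl))⟩)
    -- t*t - 4*P
    obtain ⟨C4, hr4, hs4, hm4⟩ := reach_op (B := C3)
      (t * t - ((4 : ℕ) : ℂ) * (((c0 : ℕ) : ℂ)
        + ∑ j ∈ Finset.range (2 ^ k), ((c j : ℕ) : ℂ) * TT p m g ε k (j : ℤ)))
      (Or.inl ⟨_, hs3 hm2, _, hm3, Or.inr (Or.inl rfl)⟩)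
    -- square root : z = u - v
    obtain ⟨C5, hr5, hs5, hm5⟩ := reach_op (B := C4) (u - v)
      (Or.inr ⟨_, hm4, by rw [← hPid, hrec]; ring⟩)
    -- t + z
    obtain ⟨C6, hr6, hs6, hm6⟩ := reach_op (B := C5) (t + (u - v))
      (Or.inl ⟨_, hs5 (hs4 (hs3 (hs2 htm))), _, hm5, Or.inl rfl⟩)
    -- (t + z) / 2
    have h2m : ((2 : ℕ) : ℂ) ∈ C6 :=
      hs6 (hs5 (hs4 (hs3 (hs2 (hs1 (hsubB (hbase1 2 (by omega))))))))
    obtain ⟨C7, hr7, hs7, hm7⟩ := reach_op (B := C6) ((t + (u - v)) / ((2 : ℕ) : ℂ))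
      (Or.inl ⟨_, hm6, _, h2m, Or.inr (Or.inr (Or.inr ⟨by norm_num, rfl⟩))⟩)
    have hmu : u ∈ C7 := by
      have : (t + (u - v)) / ((2 : ℕ) : ℂ) = u := by
        rw [hrec]; push_cast; ring
      rwa [this] at hm7
    -- t - u
    obtain ⟨C8, hr8, hs8, hm8⟩ := reach_op (B := C7) (t - u)
      (Or.inl ⟨_, hs7 (hs6 (hs5 (hs4 (hs3 (hs2 htm))))), _, hmu, Or.inr (Or.inl rfl)⟩)
    have hmv : v ∈ C8 := by
      have : t - u = v := by rw [hrec]; ring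
      rwa [this] at hm8
    refine ⟨C8, ?_, ?_, hs8 hmu, hmv⟩
    · have := ((((((((hr0.trans hr1).trans hr2).trans hr3).trans hr4).trans hr5).trans
        hr6).trans hr7).trans hr8)
      have he : 2 * 2 ^ k + 1 + 1 + 1 + 1 + 1 + 1 + 1 + 1 = 2 * 2 ^ k + 8 := by omega
      rwa [he] at this
    · exact fun w hw => hs8 (hs7 (hs6 (hs5 (hs4 (hs3 (hs2 (hs1 (hs0 hw))))))))
  -- iterate over all r < 2^k
  have outer : ∀ i : ℕ, i ≤ 2 ^ k → ∃ C, ReachableIn B₀ C (i * (2 * 2 ^ k + 8)) ∧ B₀ ⊆ C ∧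
      ∀ r : ℕ, r < i → TT p m g ε (k + 1) (r : ℤ) ∈ C ∧
        TT p m g ε (k + 1) ((r : ℤ) + 2 ^ k) ∈ C := by
    intro i
    induction i with
    | zero => exact fun _ => ⟨B₀, (ReachableIn.refl B₀).mono (Nat.zero_le _), subset_rfl, by omega⟩
    | succ i ih =>
      intro hi
      obtain ⟨C, hreach, hsub, hmem⟩ := ih (by omega)
      obtain ⟨C', hreach', hsub', hmu, hmv⟩ := stage C hsub i (by omega)
      refine ⟨C', ?_, hsub.trans hsub', ?_⟩
      · have := hreach.trans hreach'
        have he : i * (2 * 2 ^ k + 8) + (2 * 2 ^ k + 8) = (i + 1) * (2 * 2 ^ k + 8) := by ring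
        rwa [he] at this
      · intro r hrd
        rcases Nat.lt_or_ge r i with h | h
        · exact ⟨hsub' (hmem r h).1, hsub' (hmem r h).2⟩
        · have : r = i := by omega
          subst this
          exact ⟨hmu, hmv⟩
  obtain ⟨C, hreach, hsub, hmem⟩ := outer (2 ^ k) le_rfl
  obtain ⟨kk, hkk, A, hA0, hAs, hAk⟩ := hreach
  have harith : 2 ^ k * (2 * 2 ^ k + 8) ≤ 11 * 4 ^ k := by
    have h4 : (4 : ℕ) ^ k = 2 ^ k * 2 ^ k := by
      rw [show (4 : ℕ) = 2 * 2 from rfl, mul_pow]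
    have h1 : 1 ≤ 2 ^ k := Nat.one_le_two_pow
    nlinarith
  refine ⟨kk, le_trans hkk harith, A, hA0, hAs, ?_⟩
  rw [hAk]
  intro z hz
  rcases hz with h | h
  · exact hsub (Or.inl h)
  · obtain ⟨r', hr', rfl⟩ := h
    rcases Nat.lt_or_ge r' (2 ^ k) with h | h
    · exact (hmem r' h).1
    · have h2 := (hmem (r' - 2 ^ k) (by omega)).2
      have he : (((r' - 2 ^ k : ℕ) : ℤ) + 2 ^ k) = (r' : ℤ) := by
        have : ((2 ^ k : ℕ) : ℤ) = (2 : ℤ) ^ k := by push_cast; ring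
        omega
      rwa [he] at h2
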